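/- Let μ > 0, let d ∈ ℕ with d ≥ 1, let m, n ∈ ℕ with m + n ≥ 1, and let B₁ := {k ∈ ℝ³ : |k| ≤ 1} × {1,2} with |(𝐤,λ)| := |𝐤| and ρ·(𝐤,λ) := (ρ𝐤, λ). Let w : [0,1] × B₁^{m+n} → End(ℂ^d) be measurable and, for each fixed K ∈ B₁^{m+n}, continuous in the first variable, and define ‖w‖_μ := ( ∫_{B₁^{m+n}} sup_{r ∈ [0,1]} ‖w(r, K)‖² dK / ∏_{i=1}^{m+n} |k_i|^{3+2μ} )^{1/2}, where K = (k₁, …, k_{m+n}) and the integral is Lebesgue integration over the ℝ³-components and summation over the {1,2}-components. For ρ ∈ (0,1] define the rescaled kernel s_ρ(w)(r, K) := ρ^{(m+n)−1} w(ρ r, ρ K) (well defined since ρr ∈ [0,1] and ρK ∈ B₁^{m+n}). Then ‖s_ρ(w)‖_μ ≤ ρ^{μ(m+n)} ‖w‖_μ. -/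

import Mathlib

/-! Substitute `K' = ρK` in the integral defining `‖s_ρ(w)‖_μ`. The dilation scales Lebesgue
measure on `(ℝ³)^N` by `ρ^{-3N}` and the weight `∏ |kᵢ|^{3+2μ}` by `ρ^{(3+2μ)N}`, so their net
effect is `ρ^{2μN}`; the prefactor contributes `ρ^{2(N-1)} ≤ 1`, the supremum over `r ∈ [0, ρ]`
is dominated by the one over `[0, 1]`, and the image ball `B_ρ` lies inside `B₁`. -/

open MeasureTheory ENNReal

/-- The measure on `(ℝ³ × {1,2})^mn`: product over the `mn` slots of
(Lebesgue measure on `ℝ³`) × (counting measure on the two polarizations). -/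
noncomputable def kernelMeasure (mn : ℕ) :
    Measure (Fin mn → EuclideanSpace ℝ (Fin 3) × Fin 2) :=
  Measure.pi fun _ => (volume : Measure (EuclideanSpace ℝ (Fin 3))).prod Measure.count

/-- The norm `‖w‖_μ := (∫_{B₁^mn} sup_{r ∈ [0,1]} ‖w(r,K)‖² dK / ∏ᵢ |kᵢ|^{3+2μ})^{1/2}`
of a matrix-valued integral kernel, valued in `[0,∞]`. -/
noncomputable def kernelNormMu (d : ℕ) (μ : ℝ) (mn : ℕ)
    (w : ℝ → (Fin mn → EuclideanSpace ℝ (Fin 3) × Fin 2) →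
      (EuclideanSpace ℂ (Fin d) →L[ℂ] EuclideanSpace ℂ (Fin d))) : ℝ≥0∞ :=
  (∫⁻ K in {K : Fin mn → EuclideanSpace ℝ (Fin 3) × Fin 2 | ∀ i, ‖(K i).1‖ ≤ 1},
      (⨆ r ∈ Set.Icc (0 : ℝ) 1, (‖w r K‖₊ : ℝ≥0∞)) ^ 2 /
        ∏ i, (‖(K i).1‖₊ : ℝ≥0∞) ^ ((3 : ℝ) + 2 * μ) ∂(kernelMeasure mn)) ^ ((1 : ℝ) / 2)

open scoped NNReal

namespace MeasureTheory.Measure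

lemma pi_smul_const {ι : Type*} [Fintype ι] {α : ι → Type*} [∀ i, MeasurableSpace (α i)]
    (ν : ∀ i, Measure (α i)) [∀ i, SigmaFinite (ν i)] {c : ℝ≥0∞} (hc : c ≠ ∞) :
    Measure.pi (fun i => c • ν i) = c ^ Fintype.card ι • Measure.pi ν := by
  lift c to ℝ≥0 using hc
  have (i : ι) : SigmaFinite ((c : ℝ≥0∞) • ν i) := by
    rw [← ENNReal.smul_def]; infer_instance
  exact pi_eq fun s hs => by simp [pi_pi, Finset.prod_mul_distrib]

lemma map_prodMap_smul_id {E P : Type*} [NormedAddCommGroup E] [NormedSpace ℝ E]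
    [MeasurableSpace E] [BorelSpace E] [FiniteDimensional ℝ E] [MeasurableSpace P]
    (μ : Measure E) [μ.IsAddHaarMeasure] (ν : Measure P) [SigmaFinite ν] {r : ℝ} (hr : r ≠ 0) :
    (μ.prod ν).map (Prod.map (r • ·) id) =
      ENNReal.ofReal |(r ^ Module.finrank ℝ E)⁻¹| • μ.prod ν := by
  rw [← map_prod_map _ _ (measurable_const_smul r) measurable_id, map_addHaar_smul μ hr, map_id,
    prod_smul_left]

end MeasureTheory.Measure

abbrev BosonConfig (N : ℕ) := Fin N → EuclideanSpace ℝ (Fin 3) × Fin 2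

variable {N : ℕ}

def scaleConfig (ρ : ℝ) (K : BosonConfig N) : BosonConfig N := fun i => (ρ • (K i).1, (K i).2)

def configBall (N : ℕ) (R : ℝ) : Set (BosonConfig N) := {K | ∀ i, ‖(K i).1‖ ≤ R}

noncomputable def momentumWeight (μ : ℝ) (K : BosonConfig N) : ℝ≥0∞ :=
  ∏ i, (‖(K i).1‖₊ : ℝ≥0∞) ^ ((3 : ℝ) + 2 * μ)

noncomputable def fieldEnergySup {F : Type*} [SeminormedAddCommGroup F]
    (w : ℝ → BosonConfig N → F) (K : BosonConfig N) : ℝ≥0∞ :=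
  ⨆ r ∈ Set.Icc (0 : ℝ) 1, (‖w r K‖₊ : ℝ≥0∞)

noncomputable def kernelIntegrand {F : Type*} [SeminormedAddCommGroup F] (μ : ℝ)
    (w : ℝ → BosonConfig N → F) (K : BosonConfig N) : ℝ≥0∞ :=
  fieldEnergySup w K ^ 2 / momentumWeight μ K

lemma kernelNormMu_eq (d : ℕ) (μ : ℝ)
    (w : ℝ → BosonConfig N → (EuclideanSpace ℂ (Fin d) →L[ℂ] EuclideanSpace ℂ (Fin d))) :
    kernelNormMu d μ N w =
      (∫⁻ K in configBall N 1, kernelIntegrand μ w K ∂kernelMeasure N) ^ ((1 : ℝ) / 2) :=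
  rfl

lemma measurableEmbedding_scaleConfig {ρ : ℝ} (hρ : ρ ≠ 0) :
    MeasurableEmbedding (scaleConfig (N := N) ρ) :=
  (MeasurableEquiv.piCongrRight fun _ =>
    (MeasurableEquiv.smul₀ ρ hρ).prodCongr (MeasurableEquiv.refl (Fin 2))).measurableEmbedding

lemma kernelMeasure_map_scaleConfig {ρ : ℝ} (hρ : 0 < ρ) :
    (kernelMeasure N).map (scaleConfig ρ) = (ENNReal.ofReal ρ)⁻¹ ^ (3 * N) • kernelMeasure N := by
  have hfactor := Measure.map_prodMap_smul_id (volume : Measure (EuclideanSpace ℝ (Fin 3)))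
    (Measure.count : Measure (Fin 2)) hρ.ne'
  rw [finrank_euclideanSpace_fin, abs_of_pos (by positivity)] at hfactor
  have hσ : ∀ _ : Fin N, SigmaFinite (((volume : Measure (EuclideanSpace ℝ (Fin 3))).prod
      Measure.count).map (Prod.map (ρ • ·) id)) := fun _ => by
    rw [hfactor]; exact SMul.sigmaFinite (Real.toNNReal _)
  have hscale : scaleConfig (N := N) ρ = fun K i => Prod.map (ρ • ·) id (K i) := rfl
  rw [kernelMeasure, hscale, Measure.pi_map_pi (hμ := hσ)
      fun _ => ((measurable_const_smul ρ).prodMap measurable_id).aemeasurable,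
    hfactor, Measure.pi_smul_const _ ENNReal.ofReal_ne_top, Fintype.card_fin,
    ENNReal.ofReal_inv_of_pos (by positivity), ENNReal.ofReal_pow hρ.le, ← ENNReal.inv_pow,
    ← pow_mul, ENNReal.inv_pow]

lemma preimage_scaleConfig_configBall {ρ : ℝ} (hρ : 0 < ρ) (R : ℝ) :
    scaleConfig ρ ⁻¹' configBall N (ρ * R) = configBall N R := by
  ext K
  simp only [Set.mem_preimage, configBall, scaleConfig, Set.mem_ofPred_eq, norm_smul,
    Real.norm_of_nonneg hρ.le, mul_le_mul_iff_right₀ hρ]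

lemma configBall_mono {R R' : ℝ} (h : R ≤ R') : configBall N R ⊆ configBall N R' :=
  fun _ hK i => (hK i).trans h

lemma setLIntegral_configBall_comp_scaleConfig {ρ : ℝ} (hρ : 0 < ρ) (f : BosonConfig N → ℝ≥0∞) :
    ∫⁻ K in configBall N 1, f (scaleConfig ρ K) ∂kernelMeasure N =
      (ENNReal.ofReal ρ)⁻¹ ^ (3 * N) * ∫⁻ K in configBall N ρ, f K ∂kernelMeasure N := by
  have he := measurableEmbedding_scaleConfig (N := N) hρ.ne'
  rw [← preimage_scaleConfig_configBall hρ, mul_one, ← he.lintegral_map, ← he.restrict_map,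
    kernelMeasure_map_scaleConfig hρ, Measure.restrict_smul, lintegral_smul_measure, smul_eq_mul]

lemma momentumWeight_scaleConfig {ρ : ℝ} (hρ : 0 ≤ ρ) (μ : ℝ) (K : BosonConfig N) :
    momentumWeight μ (scaleConfig ρ K) =
      (ENNReal.ofReal ρ ^ ((3 : ℝ) + 2 * μ)) ^ N * momentumWeight μ K := by
  have hρ' : (‖ρ‖₊ : ℝ≥0∞) = ENNReal.ofReal ρ := by
    rw [← enorm_eq_nnnorm, ← ofReal_norm, Real.norm_of_nonneg hρ]
  simp only [momentumWeight, scaleConfig, nnnorm_smul, ENNReal.coe_mul, hρ',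
    ENNReal.mul_rpow_of_ne_top ENNReal.ofReal_ne_top ENNReal.coe_ne_top,
    Finset.prod_mul_distrib, Finset.prod_const, Finset.card_univ, Fintype.card_fin]

section Rescaling

variable {F : Type*} [SeminormedAddCommGroup F] [Module ℝ F] [IsBoundedSMul ℝ F]
  {ρ : ℝ} (hρ0 : 0 < ρ) (hρ1 : ρ ≤ 1) (μ c : ℝ) (w : ℝ → BosonConfig N → F)
include hρ0 hρ1

lemma fieldEnergySup_rescale_le (K : BosonConfig N) :
    fieldEnergySup (fun r K => c • w (ρ * r) (scaleConfig ρ K)) K ≤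
      ‖c‖ₑ * fieldEnergySup w (scaleConfig ρ K) := by
  refine iSup₂_le fun r hr => ?_
  have hρr : ρ * r ∈ Set.Icc (0 : ℝ) 1 :=
    ⟨mul_nonneg hρ0.le hr.1, mul_le_one₀ hρ1 hr.1 hr.2⟩
  calc (‖c • w (ρ * r) (scaleConfig ρ K)‖₊ : ℝ≥0∞)
      ≤ ‖c‖ₑ * ‖w (ρ * r) (scaleConfig ρ K)‖ₑ := enorm_smul_le
    _ ≤ ‖c‖ₑ * fieldEnergySup w (scaleConfig ρ K) := by
      gcongr
      exact le_iSup₂ (f := fun r (_ : r ∈ Set.Icc (0 : ℝ) 1) =>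
        (‖w r (scaleConfig ρ K)‖₊ : ℝ≥0∞)) _ hρr

lemma kernelIntegrand_rescale_le (K : BosonConfig N) :
    kernelIntegrand μ (fun r K => c • w (ρ * r) (scaleConfig ρ K)) K ≤
      ‖c‖ₑ ^ 2 * (ENNReal.ofReal ρ ^ ((3 : ℝ) + 2 * μ)) ^ N *
        kernelIntegrand μ w (scaleConfig ρ K) := by
  set q := (ENNReal.ofReal ρ ^ ((3 : ℝ) + 2 * μ)) ^ N
  have hq0 : q ≠ 0 := pow_ne_zero _ (ENNReal.rpow_pos (ENNReal.ofReal_pos.2 hρ0)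
    ENNReal.ofReal_ne_top).ne'
  have hqt : q ≠ ∞ := ENNReal.pow_ne_top (ENNReal.rpow_ne_top_of_ne_zero
    (ENNReal.ofReal_pos.2 hρ0).ne' ENNReal.ofReal_ne_top)
  calc kernelIntegrand μ (fun r K => c • w (ρ * r) (scaleConfig ρ K)) K
      ≤ (‖c‖ₑ * fieldEnergySup w (scaleConfig ρ K)) ^ 2 / momentumWeight μ K := by
        unfold kernelIntegrand; gcongr; exact fieldEnergySup_rescale_le hρ0 hρ1 c w K
    _ = ‖c‖ₑ ^ 2 * q * (fieldEnergySup w (scaleConfig ρ K) ^ 2 / (q * momentumWeight μ K)) := by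
        rw [mul_pow, mul_assoc, mul_div_assoc, ← mul_div_assoc q,
          ENNReal.mul_div_mul_left _ _ hq0 hqt]
    _ = _ := by rw [kernelIntegrand, momentumWeight_scaleConfig hρ0.le]

lemma setLIntegral_kernelIntegrand_rescale_le :
    ∫⁻ K in configBall N 1, kernelIntegrand μ (fun r K => c • w (ρ * r) (scaleConfig ρ K)) K
        ∂kernelMeasure N ≤
      ‖c‖ₑ ^ 2 * (ENNReal.ofReal ρ ^ (2 * μ)) ^ N *
        ∫⁻ K in configBall N 1, kernelIntegrand μ w K ∂kernelMeasure N := by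
  set p := ENNReal.ofReal ρ
  have hp0 : p ≠ 0 := (ENNReal.ofReal_pos.2 hρ0).ne'
  have hpt : p ≠ ∞ := ENNReal.ofReal_ne_top
  have hjacobian : (p ^ ((3 : ℝ) + 2 * μ)) ^ N * p⁻¹ ^ (3 * N) = (p ^ (2 * μ)) ^ N := by
    rw [ENNReal.rpow_add _ _ hp0 hpt, ENNReal.rpow_ofNat, mul_pow, mul_right_comm, ← pow_mul,
      ← mul_pow, ENNReal.mul_inv_cancel hp0 hpt, one_pow, one_mul]
  have hconst : ‖c‖ₑ ^ 2 * (p ^ ((3 : ℝ) + 2 * μ)) ^ N ≠ ∞ :=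
    ENNReal.mul_ne_top (by finiteness)
      (ENNReal.pow_ne_top (ENNReal.rpow_ne_top_of_ne_zero hp0 hpt))
  calc ∫⁻ K in configBall N 1, kernelIntegrand μ (fun r K => c • w (ρ * r) (scaleConfig ρ K)) K
        ∂kernelMeasure N
      ≤ ∫⁻ K in configBall N 1, ‖c‖ₑ ^ 2 * (p ^ ((3 : ℝ) + 2 * μ)) ^ N *
          kernelIntegrand μ w (scaleConfig ρ K) ∂kernelMeasure N :=
        lintegral_mono fun K => kernelIntegrand_rescale_le hρ0 hρ1 μ c w K
    _ = ‖c‖ₑ ^ 2 * (p ^ ((3 : ℝ) + 2 * μ)) ^ N *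
          (p⁻¹ ^ (3 * N) * ∫⁻ K in configBall N ρ, kernelIntegrand μ w K ∂kernelMeasure N) := by
        rw [lintegral_const_mul' _ _ hconst, setLIntegral_configBall_comp_scaleConfig hρ0]
    _ ≤ ‖c‖ₑ ^ 2 * (p ^ ((3 : ℝ) + 2 * μ)) ^ N *
          (p⁻¹ ^ (3 * N) * ∫⁻ K in configBall N 1, kernelIntegrand μ w K ∂kernelMeasure N) := by
        gcongr
        exact configBall_mono hρ1
    _ = ‖c‖ₑ ^ 2 * (p ^ (2 * μ)) ^ N *
          ∫⁻ K in configBall N 1, kernelIntegrand μ w K ∂kernelMeasure N := by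
        rw [← hjacobian]; ring

end Rescaling

theorem kernel_scaling_contraction_general (μ : ℝ) (d : ℕ)
    (m n : ℕ)
    (w : ℝ → (Fin (m + n) → EuclideanSpace ℝ (Fin 3) × Fin 2) →
      (EuclideanSpace ℂ (Fin d) →L[ℂ] EuclideanSpace ℂ (Fin d)))
    (ρ : ℝ) (hρ0 : 0 < ρ) (hρ1 : ρ ≤ 1) :
    kernelNormMu d μ (m + n)
      (fun r K => (ρ ^ (m + n - 1) : ℝ) • w (ρ * r) (fun i => (ρ • (K i).1, (K i).2)))
      ≤ ENNReal.ofReal ρ ^ (μ * (m + n) : ℝ) * kernelNormMu d μ (m + n) w := by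
  have hprefactor : ‖(ρ ^ (m + n - 1) : ℝ)‖ₑ ^ 2 ≤ 1 := by
    refine pow_le_one₀ zero_le ?_
    rw [← ofReal_norm, ENNReal.ofReal_le_one, norm_pow, Real.norm_of_nonneg hρ0.le]
    exact pow_le_one₀ hρ0.le hρ1
  rw [kernelNormMu_eq, kernelNormMu_eq]
  calc _ ≤ ((ENNReal.ofReal ρ ^ (2 * μ)) ^ (m + n) *
          ∫⁻ K in configBall (m + n) 1, kernelIntegrand μ w K ∂kernelMeasure (m + n)) ^
            ((1 : ℝ) / 2) :=
        ENNReal.rpow_le_rpow ((setLIntegral_kernelIntegrand_rescale_le hρ0 hρ1 μ _ w).trans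
          (mul_le_mul_left (mul_le_of_le_one_left zero_le hprefactor) _)) (by norm_num)
    _ = _ := by
        rw [ENNReal.mul_rpow_of_nonneg _ _ (by norm_num), ← ENNReal.rpow_natCast,
          ← ENNReal.rpow_mul, ← ENNReal.rpow_mul]
        congr 2
        push_cast
        ring

/-- **Contraction of integral kernels under rescaling.** For a measurable kernel
`w : [0,1] × B₁^{m+n} → End(ℂ^d)` (continuous in the field-energy variable) and
`ρ ∈ (0,1]`, the rescaled kernel `s_ρ(w)(r, K) := ρ^{(m+n)−1} w(ρr, ρK)` satisfies
`‖s_ρ(w)‖_μ ≤ ρ^{μ(m+n)} ‖w‖_μ`. -/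
theorem kernel_scaling_contraction (μ : ℝ) (hμ : 0 < μ) (d : ℕ) (hd : 1 ≤ d)
    (m n : ℕ) (hmn : 1 ≤ m + n)
    (w : ℝ → (Fin (m + n) → EuclideanSpace ℝ (Fin 3) × Fin 2) →
      (EuclideanSpace ℂ (Fin d) →L[ℂ] EuclideanSpace ℂ (Fin d)))
    (hmeas : Measurable (Function.uncurry w))
    (hcont : ∀ K, ContinuousOn (fun r => w r K) (Set.Icc (0 : ℝ) 1))
    (ρ : ℝ) (hρ0 : 0 < ρ) (hρ1 : ρ ≤ 1) :
    kernelNormMu d μ (m + n)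
      (fun r K => (ρ ^ (m + n - 1) : ℝ) • w (ρ * r) (fun i => (ρ • (K i).1, (K i).2)))
      ≤ ENNReal.ofReal ρ ^ (μ * (m + n) : ℝ) * kernelNormMu d μ (m + n) w :=
  kernel_scaling_contraction_general μ d m n w ρ hρ0 hρ1
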